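/- Let ν be any norm on R^2 and for x ∈ R^2 define c_ν(x) = limsup_{t→∞} t · (min_{1≤q≤t} dist_ν(qx, Z^2))^2. Then c_ν(x) ≤ r_η^3 for every x ∈ R^2, where r_η is the critical radius of the norm η(x1,x2,x3) = max(ν(x1,x2), |x3|), i.e., r_η = sup{r : some unimodular lattice in R^3 misses the open η-ball of radius r}. -/

import Mathlib

open Filter Set MeasureTheory Submodule
open scoped ENNReal

noncomputable def cylNorm (ν : (Fin 2 → ℝ) → ℝ) (x : Fin 3 → ℝ) : ℝ :=
  max (ν ![x 0, x 1]) |x 2|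

def latticeOf {n : ℕ} (M : Matrix (Fin n) (Fin n) ℝ) : Set (Fin n → ℝ) :=
  {x | ∃ k : Fin n → ℤ, x = M.mulVec fun i => (k i : ℝ)}

section
variable {ν : (Fin 2 → ℝ) → ℝ}
variable {ν : (Fin 2 → ℝ) → ℝ}

lemma nu_neg (hνs : ∀ (a : ℝ) y, ν (a • y) = |a| * ν y) (y : Fin 2 → ℝ) : ν (-y) = ν y := by
  simpa using hνs (-1) y

lemma nu_nonneg (hν0 : ∀ y, ν y = 0 ↔ y = 0)
    (hνs : ∀ (a : ℝ) y, ν (a • y) = |a| * ν y)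
    (hνt : ∀ y z, ν (y + z) ≤ ν y + ν z) (y : Fin 2 → ℝ) : 0 ≤ ν y := by
  have h := hνt y (-y)
  rw [add_neg_cancel, (hν0 0).mpr rfl, nu_neg hνs] at h
  linarith

lemma nu_decomp (y : Fin 2 → ℝ) : y = y 0 • ![1, 0] + y 1 • ![0, 1] := by
  funext i; fin_cases i <;> simp

lemma nu_le (hν0 : ∀ y, ν y = 0 ↔ y = 0)
    (hνs : ∀ (a : ℝ) y, ν (a • y) = |a| * ν y)
    (hνt : ∀ y z, ν (y + z) ≤ ν y + ν z) (y : Fin 2 → ℝ) :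
    ν y ≤ (ν ![1, 0] + ν ![0, 1]) * ‖y‖ := by
  have h := hνt (y 0 • ![1, 0]) (y 1 • ![0, 1])
  rw [← nu_decomp y, hνs, hνs] at h
  have h0 : |y 0| ≤ ‖y‖ := by simpa using norm_le_pi_norm y 0
  have h1 : |y 1| ≤ ‖y‖ := by simpa using norm_le_pi_norm y 1
  have e0 := nu_nonneg hν0 hνs hνt ![1, 0]
  have e1 := nu_nonneg hν0 hνs hνt ![0, 1]
  nlinarith [abs_nonneg (y 0), abs_nonneg (y 1)]

lemma nu_cont (hν0 : ∀ y, ν y = 0 ↔ y = 0)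
    (hνs : ∀ (a : ℝ) y, ν (a • y) = |a| * ν y)
    (hνt : ∀ y z, ν (y + z) ≤ ν y + ν z) : Continuous ν := by
  have hC0 : 0 ≤ ν ![1, 0] + ν ![0, 1] := by
    have := nu_nonneg hν0 hνs hνt ![1, 0]
    have := nu_nonneg hν0 hνs hνt ![0, 1]
    linarith
  have key : ∀ y z : Fin 2 → ℝ, ν y - ν z ≤ (ν ![1, 0] + ν ![0, 1]) * ‖y - z‖ := by
    intro y z
    have h := hνt (y - z) z
    rw [sub_add_cancel] at h
    have := nu_le hν0 hνs hνt (y - z)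
    linarith
  have lip : LipschitzWith (Real.toNNReal (ν ![1, 0] + ν ![0, 1])) ν := by
    refine LipschitzWith.of_dist_le_mul fun y z => ?_
    rw [Real.dist_eq, Real.coe_toNNReal _ hC0, dist_eq_norm]
    rw [abs_sub_le_iff]
    constructor
    · exact key y z
    · have := key z y
      rwa [norm_sub_rev] at this
  exact lip.continuous

lemma nu_lower (hν0 : ∀ y, ν y = 0 ↔ y = 0)
    (hνs : ∀ (a : ℝ) y, ν (a • y) = |a| * ν y)
    (hνt : ∀ y z, ν (y + z) ≤ ν y + ν z) :
    ∃ m > 0, ∀ y : Fin 2 → ℝ, m * ‖y‖ ≤ ν y := by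
  obtain ⟨y₀, hy₀s, hy₀m⟩ := (isCompact_sphere (0 : Fin 2 → ℝ) 1).exists_isMinOn
    (NormedSpace.sphere_nonempty.mpr zero_le_one)
    (nu_cont hν0 hνs hνt).continuousOn
  have hy₀ : y₀ ≠ 0 := by
    intro h
    rw [mem_sphere_iff_norm, h, sub_zero, norm_zero] at hy₀s
    norm_num at hy₀s
  have hm : 0 < ν y₀ :=
    lt_of_le_of_ne (nu_nonneg hν0 hνs hνt y₀) (fun h => hy₀ ((hν0 y₀).mp h.symm))
  refine ⟨ν y₀, hm, fun y => ?_⟩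
  rcases eq_or_ne y 0 with rfl | hy
  · simp [(hν0 0).mpr rfl]
  · have hny : 0 < ‖y‖ := norm_pos_iff.mpr hy
    have hu : ‖y‖⁻¹ • y ∈ Metric.sphere (0 : Fin 2 → ℝ) 1 := by
      simp [norm_smul, abs_of_pos (inv_pos.mpr hny), inv_mul_cancel₀ hny.ne']
    have h1 : ν y₀ ≤ ν (‖y‖⁻¹ • y) := hy₀m hu
    have h2 : ν (‖y‖⁻¹ • y) = ‖y‖⁻¹ * ν y := by
      rw [hνs, abs_of_pos (inv_pos.mpr hny)]
    rw [h2] at h1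
    calc ν y₀ * ‖y‖ ≤ (‖y‖⁻¹ * ν y) * ‖y‖ := by nlinarith
    _ = ν y := by field_simp


lemma convex_combo_lt {X Y R a c : ℝ} (hX : X < R) (hY : Y < R) (ha : 0 ≤ a)
    (hc : 0 ≤ c) (hac : a + c = 1) : a * X + c * Y < R := by
  rcases ha.eq_or_lt with h | h
  · have hc1 : c = 1 := by linarith
    rw [← h, hc1]; linarith
  · have h1 : a * X < a * R := mul_lt_mul_of_pos_left hX h
    have h2 : c * Y ≤ c * R := mul_le_mul_of_nonneg_left hY.le hc
    have h3 : a * R + c * R = R := by rw [← add_mul, hac, one_mul]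
    linarith

lemma sum_zsmul_col (M : Matrix (Fin 3) (Fin 3) ℝ) (c : Fin 3 → ℤ) :
    ∑ i : Fin 3, c i • (fun j => M j i) = M.mulVec fun i => (c i : ℝ) := by
  funext j
  simp [Matrix.mulVec, dotProduct, Fin.sum_univ_three, Finset.sum_apply,
    mul_comm]

lemma basis_col {M : Matrix (Fin 3) (Fin 3) ℝ} (hM : Invertible M) :
    ∀ i, ((Pi.basisFun ℝ (Fin 3)).map (M.toLinearEquiv' hM)) i = fun j => M j i := by
  intro i
  simp [Matrix.toLinearEquiv', Matrix.mulVec_single, Matrix.toLin'_apply]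
  rfl

lemma lattice_mem_iff {M : Matrix (Fin 3) (Fin 3) ℝ} (hM : Invertible M)
    (x : Fin 3 → ℝ) :
    x ∈ span ℤ (Set.range ((Pi.basisFun ℝ (Fin 3)).map (M.toLinearEquiv' hM)))
      ↔ x ∈ latticeOf M := by
  have hcol := basis_col hM
  rw [mem_span_range_iff_exists_fun]
  constructor
  · rintro ⟨c, hc⟩
    exact ⟨c, by rw [← hc, ← sum_zsmul_col]; exact Finset.sum_congr rfl fun i _ => by rw [hcol]⟩
  · rintro ⟨c, rfl⟩
    exact ⟨c, by rw [← sum_zsmul_col]; exact Finset.sum_congr rfl fun i _ => by rw [hcol]⟩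
end

section
variable {ν : (Fin 2 → ℝ) → ℝ}
open ZSpan

lemma minkowski3 (hν0 : ∀ y, ν y = 0 ↔ y = 0)
    (hνs : ∀ (a : ℝ) y, ν (a • y) = |a| * ν y)
    (hνt : ∀ y z, ν (y + z) ≤ ν y + ν z)
    (M : Matrix (Fin 3) (Fin 3) ℝ) (hdet : |M.det| = 1) :
    ∃ y ∈ latticeOf M, y ≠ 0 ∧ cylNorm ν y < 2 * (ν ![1, 0] + ν ![0, 1]) + 2 := by
  have hC0 : 0 ≤ ν ![1, 0] + ν ![0, 1] := by
    have := nu_nonneg hν0 hνs hνt ![1, 0]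
    have := nu_nonneg hν0 hνs hνt ![0, 1]
    linarith
  have hdet0 : M.det ≠ 0 := by intro h; rw [h] at hdet; simp at hdet
  have hM : Invertible M := M.invertibleOfIsUnitDet (isUnit_iff_ne_zero.mpr hdet0)
  set b := (Pi.basisFun ℝ (Fin 3)).map (M.toLinearEquiv' hM) with hb
  have h_fund := ZSpan.isAddFundamentalDomain' b volume
  have : Countable (span ℤ (Set.range b)).toAddSubgroup := by
    change Countable (span ℤ (Set.range b)); infer_instance
  set s : Set (Fin 3 → ℝ) := {x | cylNorm ν x < 2 * (ν ![1, 0] + ν ![0, 1]) + 2} with hs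
  have h_symm : ∀ x ∈ s, -x ∈ s := by
    intro x hx
    simp only [hs, Set.mem_setOf_eq, cylNorm, max_lt_iff] at hx ⊢
    have h1 : (![(-x) 0, (-x) 1] : Fin 2 → ℝ) = -(![x 0, x 1]) := by
      funext i; fin_cases i <;> simp
    constructor
    · rw [h1, nu_neg hνs]; exact hx.1
    · simpa using hx.2
  have h_conv : Convex ℝ s := by
    intro x hx y hy a c ha hc hac
    simp only [hs, Set.mem_setOf_eq, cylNorm, max_lt_iff] at hx hy ⊢
    constructor
    · have h1 : (![(a • x + c • y) 0, (a • x + c • y) 1] : Fin 2 → ℝ)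
          = a • ![x 0, x 1] + c • ![y 0, y 1] := by
        funext i; fin_cases i <;> simp
      rw [h1]
      calc ν (a • ![x 0, x 1] + c • ![y 0, y 1])
          ≤ a * ν ![x 0, x 1] + c * ν ![y 0, y 1] := by
            have := hνt (a • ![x 0, x 1]) (c • ![y 0, y 1])
            rw [hνs, hνs, abs_of_nonneg ha, abs_of_nonneg hc] at this
            exact this
        _ < 2 * (ν ![1, 0] + ν ![0, 1]) + 2 := convex_combo_lt hx.1 hy.1 ha hc hac
    · have : |(a • x + c • y) 2| ≤ a * |x 2| + c * |y 2| := by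
        simp only [Pi.add_apply, Pi.smul_apply, smul_eq_mul]
        calc |a * x 2 + c * y 2| ≤ |a * x 2| + |c * y 2| := abs_add_le _ _
          _ = a * |x 2| + c * |y 2| := by
              rw [abs_mul, abs_mul, abs_of_nonneg ha, abs_of_nonneg hc]
      exact lt_of_le_of_lt this (convex_combo_lt hx.2 hy.2 ha hc hac)
  have h_box : (univ.pi fun _ : Fin 3 => Ioo (-2 : ℝ) 2) ⊆ s := by
    intro x hx
    simp only [Set.mem_pi, mem_univ, forall_true_left, mem_Ioo] at hx
    simp only [hs, Set.mem_setOf_eq, cylNorm, max_lt_iff]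
    constructor
    · have hn : ‖(![x 0, x 1] : Fin 2 → ℝ)‖ ≤ 2 := by
        rw [pi_norm_le_iff_of_nonneg (by norm_num)]
        intro i
        fin_cases i
        · simpa [Real.norm_eq_abs] using le_of_lt (abs_lt.mpr ⟨(hx 0).1, (hx 0).2⟩)
        · simpa [Real.norm_eq_abs] using le_of_lt (abs_lt.mpr ⟨(hx 1).1, (hx 1).2⟩)
      have := nu_le hν0 hνs hνt ![x 0, x 1]
      nlinarith
    · have := abs_lt.mpr ⟨(hx 2).1, (hx 2).2⟩
      linarith
  have h_vol : volume (fundamentalDomain b) * 2 ^ Module.finrank ℝ (Fin 3 → ℝ) < volume s := by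
    have hfd : volume (fundamentalDomain b) = 1 := by
      rw [ZSpan.volume_fundamentalDomain]
      have hMb : (Matrix.of ⇑b) = M.transpose := by
        ext i j
        rw [show (Matrix.of ⇑b) i j = b i j from rfl, basis_col hM]
        rfl
      rw [hMb, Matrix.det_transpose, hdet, ENNReal.ofReal_one]
    have hbox : volume (univ.pi fun _ : Fin 3 => Ioo (-2 : ℝ) 2) = 64 := by
      rw [volume_pi_pi]
      simp only [Real.volume_Ioo, show ((2:ℝ) - (-2)) = 4 by norm_num,
        Finset.prod_const, Finset.card_univ, Fintype.card_fin]
      rw [show (ENNReal.ofReal 4) = 4 from by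
        rw [show (4:ℝ) = ((4:ℕ):ℝ) by norm_num, ENNReal.ofReal_natCast]; norm_num]
      norm_num
    have h2 : (64 : ℝ≥0∞) ≤ volume s := hbox ▸ measure_mono h_box
    rw [hfd, one_mul]
    refine lt_of_lt_of_le ?_ h2
    rw [show Module.finrank ℝ (Fin 3 → ℝ) = 3 by simp]
    norm_num
  obtain ⟨⟨y, hy⟩, h_nz, h_mem⟩ :=
    exists_ne_zero_mem_lattice_of_measure_mul_two_pow_lt_measure h_fund h_symm h_conv h_vol
  refine ⟨y, ?_, ?_, h_mem⟩
  · rw [← lattice_mem_iff hM y]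
    exact hy
  · intro h
    apply h_nz
    exact Subtype.ext h
end

/-- The critical radius of a norm `η` on `ℝⁿ`. -/
noncomputable def critRad {n : ℕ} (η : (Fin n → ℝ) → ℝ) : ℝ :=
  sSup {r | 0 < r ∧ ∃ M : Matrix (Fin n) (Fin n) ℝ, |M.det| = 1 ∧
    latticeOf M ∩ {x | η x < r} = {0}}

noncomputable def distNu (ν : (Fin 2 → ℝ) → ℝ) (y : Fin 2 → ℝ) : ℝ :=
  sInf {d | ∃ p : Fin 2 → ℤ, d = ν (y - fun i => (p i : ℝ))}

noncomputable def minDist (ν : (Fin 2 → ℝ) → ℝ) (x : Fin 2 → ℝ) (t : ℝ) : ℝ :=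
  sInf {d | ∃ q : ℤ, 1 ≤ q ∧ (q : ℝ) ≤ t ∧ d = distNu ν fun i => (q : ℝ) * x i}

noncomputable def cNu (ν : (Fin 2 → ℝ) → ℝ) (x : Fin 2 → ℝ) : ℝ :=
  Filter.limsup (fun t : ℝ => t * (minDist ν x t) ^ 2) Filter.atTop

section
variable {ν : (Fin 2 → ℝ) → ℝ}

lemma crit_set_bddAbove (hν0 : ∀ y, ν y = 0 ↔ y = 0)
    (hνs : ∀ (a : ℝ) y, ν (a • y) = |a| * ν y)
    (hνt : ∀ y z, ν (y + z) ≤ ν y + ν z) :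
    BddAbove {r | 0 < r ∧ ∃ M : Matrix (Fin 3) (Fin 3) ℝ, |M.det| = 1 ∧
      latticeOf M ∩ {x | cylNorm ν x < r} = {0}} := by
  refine ⟨2 * (ν ![1, 0] + ν ![0, 1]) + 2, fun r hr => ?_⟩
  obtain ⟨hr0, M, hdet, hinter⟩ := hr
  by_contra hcon
  push_neg at hcon
  obtain ⟨y, hyL, hy0, hyR⟩ := minkowski3 hν0 hνs hνt M hdet
  have : y ∈ latticeOf M ∩ {x | cylNorm ν x < r} := ⟨hyL, lt_trans hyR hcon⟩
  rw [hinter] at this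
  exact hy0 this

lemma zero_mem_lattice {n : ℕ} (M : Matrix (Fin n) (Fin n) ℝ) : (0 : Fin n → ℝ) ∈ latticeOf M :=
  ⟨0, by rw [show (fun i : Fin n => ((0 : Fin n → ℤ) i : ℝ)) = 0 from funext fun i => Int.cast_zero,
    Matrix.mulVec_zero]⟩

lemma cyl_zero (hν0 : ∀ y, ν y = 0 ↔ y = 0) : cylNorm ν 0 = 0 := by
  unfold cylNorm
  rw [show (![(0 : Fin 3 → ℝ) 0, (0 : Fin 3 → ℝ) 1] : Fin 2 → ℝ) = 0 from by
    funext i; fin_cases i <;> rfl]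
  rw [(hν0 0).mpr rfl]
  simp

lemma critRad_pos (hν0 : ∀ y, ν y = 0 ↔ y = 0)
    (hνs : ∀ (a : ℝ) y, ν (a • y) = |a| * ν y)
    (hνt : ∀ y z, ν (y + z) ≤ ν y + ν z) :
    0 < critRad (cylNorm ν) := by
  obtain ⟨m, hm, hml⟩ := nu_lower hν0 hνs hνt
  set r0 := min 1 m with hr0
  have hr0p : 0 < r0 := lt_min one_pos hm
  have hmem : r0 ∈ {r | 0 < r ∧ ∃ M : Matrix (Fin 3) (Fin 3) ℝ, |M.det| = 1 ∧
      latticeOf M ∩ {x | cylNorm ν x < r} = {0}} := by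
    refine ⟨hr0p, 1, by simp, ?_⟩
    ext y
    simp only [Set.mem_inter_iff, Set.mem_setOf_eq, Set.mem_singleton_iff]
    constructor
    · rintro ⟨⟨k, rfl⟩, hlt⟩
      rw [Matrix.one_mulVec] at hlt ⊢
      rw [cylNorm, max_lt_iff] at hlt
      have hk2 : k 2 = 0 := by
        by_contra h
        have h1 : (1 : ℝ) ≤ |((k 2 : ℤ) : ℝ)| := by
          rw [← Int.cast_abs]; exact_mod_cast Int.one_le_abs h
        have h2 := hlt.2
        have h3 : r0 ≤ 1 := min_le_left _ _
        linarith
      have hk01 : k 0 = 0 ∧ k 1 = 0 := by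
        by_contra h
        have h1 : (1 : ℝ) ≤ ‖(![(k 0 : ℝ), (k 1 : ℝ)] : Fin 2 → ℝ)‖ := by
          rcases Decidable.not_and_iff_or_not.mp h with h' | h'
          · calc (1:ℝ) ≤ |((k 0 : ℤ) : ℝ)| := by
                  rw [← Int.cast_abs]; exact_mod_cast Int.one_le_abs h'
              _ = ‖(![(k 0 : ℝ), (k 1 : ℝ)] : Fin 2 → ℝ) 0‖ := by simp [Real.norm_eq_abs]
              _ ≤ _ := norm_le_pi_norm _ 0
          · calc (1:ℝ) ≤ |((k 1 : ℤ) : ℝ)| := by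
                  rw [← Int.cast_abs]; exact_mod_cast Int.one_le_abs h'
              _ = ‖(![(k 0 : ℝ), (k 1 : ℝ)] : Fin 2 → ℝ) 1‖ := by simp [Real.norm_eq_abs]
              _ ≤ _ := norm_le_pi_norm _ 1
        have h2 := hml ![(k 0 : ℝ), (k 1 : ℝ)]
        have h3 := hlt.1
        have h4 : r0 ≤ m := min_le_right _ _
        nlinarith [mul_le_mul_of_nonneg_left h1 hm.le]
      funext i
      fin_cases i <;> simp [hk01.1, hk01.2, hk2]
    · rintro rfl
      exact ⟨zero_mem_lattice 1, by rw [cyl_zero hν0]; exact hr0p⟩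
  exact lt_of_lt_of_le hr0p (le_csSup (crit_set_bddAbove hν0 hνs hνt) hmem)
end

section
variable {ν : (Fin 2 → ℝ) → ℝ}

lemma distNu_nonneg (hν0 : ∀ y, ν y = 0 ↔ y = 0)
    (hνs : ∀ (a : ℝ) y, ν (a • y) = |a| * ν y)
    (hνt : ∀ y z, ν (y + z) ≤ ν y + ν z) (y : Fin 2 → ℝ) : 0 ≤ distNu ν y :=
  Real.sInf_nonneg fun _ ⟨_, hp⟩ => hp ▸ nu_nonneg hν0 hνs hνt _

lemma minDist_nonneg (hν0 : ∀ y, ν y = 0 ↔ y = 0)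
    (hνs : ∀ (a : ℝ) y, ν (a • y) = |a| * ν y)
    (hνt : ∀ y z, ν (y + z) ≤ ν y + ν z) (x : Fin 2 → ℝ) (t : ℝ) : 0 ≤ minDist ν x t :=
  Real.sInf_nonneg fun _ ⟨_, _, _, hd⟩ => hd ▸ distNu_nonneg hν0 hνs hνt _

lemma key_bound (hν0 : ∀ y, ν y = 0 ↔ y = 0)
    (hνs : ∀ (a : ℝ) y, ν (a • y) = |a| * ν y)
    (hνt : ∀ y z, ν (y + z) ≤ ν y + ν z) (x : Fin 2 → ℝ) {r : ℝ}
    (hr : critRad (cylNorm ν) < r) :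
    ∀ᶠ t in atTop, t * (minDist ν x t) ^ 2 ≤ r ^ 3 := by
  have hrpos : 0 < r := lt_trans (critRad_pos hν0 hνs hνt) hr
  obtain ⟨m, hm, hml⟩ := nu_lower hν0 hνs hνt
  filter_upwards [eventually_gt_atTop (max 1 (r ^ 3 / m ^ 2))] with t ht
  have ht1 : 1 < t := lt_of_le_of_lt (le_max_left _ _) ht
  have htm : r ^ 3 / m ^ 2 < t := lt_of_le_of_lt (le_max_right _ _) ht
  have ht0 : 0 < t := by linarith
  set α := Real.sqrt (t / r) with hα
  have hα2 : α ^ 2 = t / r := Real.sq_sqrt (by positivity)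
  have hαpos : 0 < α := Real.sqrt_pos.mpr (by positivity)
  set β := r / t with hβ
  have hβpos : 0 < β := by positivity
  set M : Matrix (Fin 3) (Fin 3) ℝ :=
    !![α, 0, -(α * x 0); 0, α, -(α * x 1); 0, 0, β] with hM
  have hdet : M.det = 1 := by
    have hαα : α * α = t / r := by rw [← hα2]; ring
    have hfin : α * α * β = 1 := by rw [hαα, hβ]; field_simp
    rw [hM, Matrix.det_fin_three]
    simp
    linarith
  have hdet1 : |M.det| = 1 := by rw [hdet]; simp
  have hne : latticeOf M ∩ {z | cylNorm ν z < r} ≠ {0} := by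
    intro hEq
    have := le_csSup (crit_set_bddAbove hν0 hνs hνt) ⟨hrpos, M, hdet1, hEq⟩
    rw [show sSup {r | 0 < r ∧ ∃ M : Matrix (Fin 3) (Fin 3) ℝ, |M.det| = 1 ∧
      latticeOf M ∩ {x | cylNorm ν x < r} = {0}} = critRad (cylNorm ν) from rfl] at this
    linarith
  have h0mem : (0 : Fin 3 → ℝ) ∈ latticeOf M ∩ {z | cylNorm ν z < r} :=
    ⟨zero_mem_lattice M, by rw [Set.mem_setOf_eq, cyl_zero hν0]; exact hrpos⟩
  obtain ⟨y, hy, hy0⟩ : ∃ y ∈ latticeOf M ∩ {z | cylNorm ν z < r}, y ≠ 0 := by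
    by_contra hcon
    push_neg at hcon
    exact hne (Set.eq_singleton_iff_unique_mem.mpr ⟨h0mem, hcon⟩)
  obtain ⟨k, hk⟩ := hy.1
  have hylt := hy.2
  rw [Set.mem_setOf_eq, cylNorm, max_lt_iff] at hylt
  set u : Fin 2 → ℝ := ![(k 0 : ℝ) - x 0 * k 2, (k 1 : ℝ) - x 1 * k 2] with hu
  have hcomp0 : y 0 = α * u 0 := by
    rw [hk]; simp [hM, hu, Matrix.mulVec, dotProduct, Fin.sum_univ_three]; ring
  have hcomp1 : y 1 = α * u 1 := by
    rw [hk]; simp [hM, hu, Matrix.mulVec, dotProduct, Fin.sum_univ_three]; ring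
  have hcomp2 : y 2 = β * k 2 := by
    rw [hk]; simp [hM, Matrix.mulVec, dotProduct, Fin.sum_univ_three]
  have hvec : (![y 0, y 1] : Fin 2 → ℝ) = α • u := by
    funext i; fin_cases i <;> simp [hcomp0, hcomp1]
  have hνu : α * ν u < r := by
    have := hylt.1
    rw [hvec, hνs, abs_of_pos hαpos] at this
    exact this
  have hνu' : ν u < r / α := (lt_div_iff₀ hαpos).mpr (by rw [mul_comm]; exact hνu)
  have hk2t : |((k 2 : ℤ) : ℝ)| < t := by
    by_contra hcontra
    push_neg at hcontra
    have h1 : β * t ≤ β * |((k 2 : ℤ) : ℝ)| := mul_le_mul_of_nonneg_left hcontra hβpos.le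
    have h2 : β * t = r := by rw [hβ]; field_simp
    have h3 := hylt.2
    rw [hcomp2, abs_mul, abs_of_pos hβpos] at h3
    linarith
  have hrα2 : (r / α) ^ 2 = r ^ 3 / t := by
    rw [div_pow, hα2]
    field_simp
  rcases eq_or_ne (k 2) 0 with hk2 | hk2
  · exfalso
    have hk01 : ¬(k 0 = 0 ∧ k 1 = 0) := by
      rintro ⟨h0, h1⟩
      apply hy0
      rw [hk]
      funext i
      fin_cases i <;> simp [hM, Matrix.mulVec, dotProduct, Fin.sum_univ_three, h0, h1, hk2]
    have hun : (1 : ℝ) ≤ ‖u‖ := by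
      rcases Decidable.not_and_iff_or_not.mp hk01 with h' | h'
      · calc (1:ℝ) ≤ |((k 0 : ℤ) : ℝ)| := by
              rw [← Int.cast_abs]; exact_mod_cast Int.one_le_abs h'
          _ = ‖u 0‖ := by simp [hu, hk2, Real.norm_eq_abs]
          _ ≤ _ := norm_le_pi_norm _ 0
      · calc (1:ℝ) ≤ |((k 1 : ℤ) : ℝ)| := by
              rw [← Int.cast_abs]; exact_mod_cast Int.one_le_abs h'
          _ = ‖u 1‖ := by simp [hu, hk2, Real.norm_eq_abs]
          _ ≤ _ := norm_le_pi_norm _ 1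
    have hmu : m ≤ ν u := by
      have := hml u
      nlinarith [mul_le_mul_of_nonneg_left hun hm.le]
    have h5 : (r / α) ^ 2 < m ^ 2 := by
      rw [hrα2, div_lt_iff₀ ht0]
      have e1 : r ^ 3 / m ^ 2 * m ^ 2 = r ^ 3 := by field_simp
      have e2 := mul_lt_mul_of_pos_right htm (show (0:ℝ) < m ^ 2 by positivity)
      nlinarith
    have h6 : r / α < m := by nlinarith [div_pos hrpos hαpos]
    linarith
  · -- k 2 ≠ 0
    have hq1 : 1 ≤ |k 2| := Int.one_le_abs hk2
    have hqt : ((|k 2| : ℤ) : ℝ) ≤ t := by rw [Int.cast_abs]; exact hk2t.le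
    have hmem : ν u ∈ {d | ∃ p : Fin 2 → ℤ,
        d = ν ((fun i => ((|k 2| : ℤ) : ℝ) * x i) - fun i => (p i : ℝ))} := by
      rcases le_or_gt 0 (k 2) with hsgn | hsgn
      · refine ⟨![k 0, k 1], ?_⟩
        have habs : |k 2| = k 2 := abs_of_nonneg hsgn
        have hw : ((fun i => ((|k 2| : ℤ) : ℝ) * x i)
            - fun i => ((![k 0, k 1] : Fin 2 → ℤ) i : ℝ)) = -u := by
          funext i; fin_cases i <;> simp [hu, habs] <;> ring
        rw [hw, nu_neg hνs]
      · refine ⟨![-(k 0), -(k 1)], ?_⟩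
        have habs : |k 2| = -(k 2) := abs_of_neg hsgn
        have hw : ((fun i => ((|k 2| : ℤ) : ℝ) * x i)
            - fun i => ((![-(k 0), -(k 1)] : Fin 2 → ℤ) i : ℝ)) = u := by
          funext i; fin_cases i <;> simp [hu, habs] <;> ring
        rw [hw]
    have hdn : distNu ν (fun i => ((|k 2| : ℤ) : ℝ) * x i) ≤ ν u :=
      csInf_le ⟨0, fun d hd => by
        obtain ⟨p, hp⟩ := hd; exact hp ▸ nu_nonneg hν0 hνs hνt _⟩ hmem
    have hmd : minDist ν x t ≤ distNu ν (fun i => ((|k 2| : ℤ) : ℝ) * x i) :=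
      csInf_le ⟨0, fun d hd => by
        obtain ⟨q, _, _, hdq⟩ := hd; exact hdq ▸ distNu_nonneg hν0 hνs hνt _⟩
        ⟨|k 2|, hq1, hqt, rfl⟩
    have h7 : minDist ν x t ≤ r / α := le_trans hmd (le_trans hdn hνu'.le)
    have h8 : (minDist ν x t) ^ 2 ≤ (r / α) ^ 2 :=
      pow_le_pow_left₀ (minDist_nonneg hν0 hνs hνt x t) h7 2
    calc t * (minDist ν x t) ^ 2 ≤ t * (r / α) ^ 2 := mul_le_mul_of_nonneg_left h8 ht0.le
      _ = r ^ 3 := by rw [hrα2]; field_simp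
end

theorem stmt18 (ν : (Fin 2 → ℝ) → ℝ)
    (hν0 : ∀ y, ν y = 0 ↔ y = 0)
    (hνs : ∀ (a : ℝ) y, ν (a • y) = |a| * ν y)
    (hνt : ∀ y z, ν (y + z) ≤ ν y + ν z) :
    ∀ x : Fin 2 → ℝ, cNu ν x ≤ critRad (cylNorm ν) ^ 3 := by
  intro x
  have main : ∀ r, critRad (cylNorm ν) < r → cNu ν x ≤ r ^ 3 := by
    intro r hr
    refine Filter.limsup_le_of_le ?_ (key_bound hν0 hνs hνt x hr)
    refine Filter.isCoboundedUnder_le_of_eventually_le (Filter.atTop : Filter ℝ) (x := 0) ?_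
    filter_upwards [eventually_ge_atTop (0 : ℝ)] with t ht
    exact mul_nonneg ht (sq_nonneg _)
  have htends : Filter.Tendsto (fun ε : ℝ => (critRad (cylNorm ν) + ε) ^ 3)
      (nhdsWithin 0 (Set.Ioi 0)) (nhds (critRad (cylNorm ν) ^ 3)) := by
    have hcont : Continuous (fun ε : ℝ => (critRad (cylNorm ν) + ε) ^ 3) :=
      (continuous_const.add continuous_id).pow 3
    have := hcont.tendsto 0
    rw [show critRad (cylNorm ν) + 0 = critRad (cylNorm ν) from add_zero _] at this
    exact this.mono_left nhdsWithin_le_nhds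
  refine ge_of_tendsto htends ?_
  filter_upwards [self_mem_nhdsWithin] with ε hε
  exact main _ (by linarith [Set.mem_Ioi.mp hε])
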